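/- arXiv:2109.03717 — 7 statements merged into one kernel-verified Lean document; each statement's English description precedes it below -/
import Mathlib

section
/- Let P be a triangle in a Euclidean plane with vertices a, b, c and let f be an affine linear function on the plane with f(a) < f(b) < f(c), such that the gradient of f (with respect to the Euclidean metric) is not parallel to any edge of P. If the edge bc has an in-flow (i.e., the negative gradient of f, evaluated at interior points of the edge bc, points out of the triangle P across bc), then the interior angle of P at the vertex b is strictly greater than π/2. -/
/-!
In barycentric coordinates of the triangle, the in-flow across `bc` says that the coordinate
attached to `a` does not grow along `-∇f`; hence `∇f = p (a - b) + q (c - b)` with `p ≥ 0`.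
Together with `⟪∇f, a - b⟫ < 0 < ⟪∇f, c - b⟫` (monotonicity of `f` along the vertices) and
Cauchy–Schwarz this forces `⟪a - b, c - b⟫ < 0`, i.e. an obtuse angle at `b`.
-/

open EuclideanGeometry Real Set

/-- The edge `e` (a relatively open segment) of the region `P` has an *in-flow* for the
(constant) negative gradient field `-g`: from points of `e`, flowing along `-g` for small
positive time one does not enter the interior of `P`. -/
def HasInFlow (P : Set (EuclideanSpace ℝ (Fin 2))) (g : EuclideanSpace ℝ (Fin 2))
    (e : Set (EuclideanSpace ℝ (Fin 2))) : Prop :=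
  ∀ x ∈ e, ∀ᶠ t in nhdsWithin (0 : ℝ) (Set.Ioi 0), x + t • (-g) ∉ interior P

open Filter Topology

theorem real_inner_neg_of_eq_smul_add_smul {F : Type*} [NormedAddCommGroup F]
    [InnerProductSpace ℝ F] {g v e : F} {p q : ℝ} (hg : g = p • v + q • e) (hp : 0 ≤ p)
    (hgv : inner ℝ g v < 0) (hge : 0 < inner ℝ g e) : inner ℝ v e < 0 := by
  subst hg
  simp only [inner_add_left, real_inner_smul_left, real_inner_comm v e] at hgv hge
  have hcs := real_inner_mul_inner_self_le v e
  have hv := real_inner_self_nonneg (x := v)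
  have he := real_inner_self_nonneg (x := e)
  -- If `⟪v, e⟫ ≥ 0` then `q < 0`, and multiplying the two inequalities below gives
  -- `⟪v, e⟫² > ‖v‖²‖e‖²`.
  by_contra! hI
  have hq : q < 0 := by nlinarith [mul_nonneg hp hv]
  have h1 : p * inner ℝ v v < -q * inner ℝ v e := by linarith
  have h2 : -q * inner ℝ e e < p * inner ℝ v e := by linarith
  have hprod := mul_lt_mul'' h1 h2 (by positivity) (by nlinarith)
  nlinarith [mul_nonneg (mul_nonneg hp (neg_nonneg.2 hq.le)) (sub_nonneg.2 hcs)]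

theorem InnerProductGeometry.pi_div_two_lt_angle_of_inner_neg {F : Type*} [NormedAddCommGroup F]
    [InnerProductSpace ℝ F] {x y : F} (h : inner ℝ x y < 0) :
    π / 2 < InnerProductGeometry.angle x y := by
  have hx : x ≠ 0 := by rintro rfl; simp at h
  have hy : y ≠ 0 := by rintro rfl; simp at h
  rw [InnerProductGeometry.angle, ← not_le, Real.arccos_le_pi_div_two, not_le]
  exact div_neg_of_neg_of_pos h (mul_pos (norm_pos_iff.2 hx) (norm_pos_iff.2 hy))

theorem AffineBasis.sum_linear_coord_smul_sub {ι k V : Type*} [Fintype ι] [Ring k]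
    [AddCommGroup V] [Module k V] (B : AffineBasis ι k V) (v : V) (j : ι) :
    ∑ i, (B.coord i).linear v • (B i - B j) = v := by
  have hlin : ∀ i, (B.coord i).linear v = B.coord i (v + B j) - B.coord i (B j) := fun i => by
    simpa using (B.coord i).linearMap_vsub (v + B j) (B j)
  simp_rw [hlin, sub_smul, smul_sub, Finset.sum_sub_distrib, ← Finset.sum_smul,
    B.linear_combination_coord_eq_self, B.sum_coord_apply_eq_one]
  simp

theorem AffineBasis.coord_add_smul {ι k V : Type*} [Ring k] [AddCommGroup V] [Module k V]
    (B : AffineBasis ι k V) (i : ι) (x w : V) (t : k) :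
    B.coord i (x + t • w) = B.coord i x + t * (B.coord i).linear w := by
  rw [add_comm x, ← vadd_eq_add, AffineMap.map_vadd, LinearMap.map_smul, smul_eq_mul,
    vadd_eq_add, add_comm]

theorem AffineBasis.linear_coord_nonpos_of_eventually_notMem_interior {ι E : Type*} [Finite ι]
    [NormedAddCommGroup E] [NormedSpace ℝ E] [FiniteDimensional ℝ E] (B : AffineBasis ι ℝ E)
    {x w : E} {i : ι} (hxi : B.coord i x = 0) (hx : ∀ j ≠ i, 0 < B.coord j x)
    (h : ∀ᶠ t in 𝓝[>] (0 : ℝ), x + t • w ∉ interior (convexHull ℝ (range B))) :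
    (B.coord i).linear w ≤ 0 := by
  by_contra! hw
  have hint : ∀ᶠ t in 𝓝[>] (0 : ℝ), x + t • w ∈ interior (convexHull ℝ (range B)) := by
    simp only [B.interior_convexHull, mem_ofPred_eq, B.coord_add_smul, eventually_all]
    intro j
    by_cases hj : j = i
    · subst hj
      filter_upwards [self_mem_nhdsWithin] with t ht
      rw [hxi, zero_add]
      exact mul_pos ht hw
    · have hcont : Continuous fun t : ℝ => B.coord j x + t * (B.coord j).linear w := by fun_prop
      refine eventually_nhdsWithin_of_eventually_nhds
        (continuousAt_const.eventually_lt hcont.continuousAt ?_)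
      simpa using hx j hj
  obtain ⟨t, hmem, hnot⟩ := (hint.and h).exists
  exact hnot hmem

theorem AffineBasis.linear_coord_nonneg_of_hasInFlow
    (B : AffineBasis (Fin 3) ℝ (EuclideanSpace ℝ (Fin 2))) {g : EuclideanSpace ℝ (Fin 2)}
    (hin : HasInFlow (convexHull ℝ (range B)) g (openSegment ℝ (B 1) (B 2))) :
    0 ≤ (B.coord 0).linear g := by
  have hmid : ∀ i, B.coord i (midpoint ℝ (B 1) (B 2)) =
      midpoint ℝ (if i = 1 then 1 else 0) (if i = 2 then 1 else 0) := fun i => by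
    rw [AffineMap.map_midpoint, B.coord_apply, B.coord_apply]
  have hflow := B.linear_coord_nonpos_of_eventually_notMem_interior (i := 0) (by simp [hmid])
    (by intro j hj; fin_cases j <;> simp_all [midpoint_eq_smul_add])
    (hin _ (midpoint_mem_openSegment (B 1) (B 2)))
  simpa using hflow

theorem stmt3_general (a b c g : EuclideanSpace ℝ (Fin 2)) (c₀ : ℝ)
    (f : EuclideanSpace ℝ (Fin 2) → ℝ)
    (hf : ∀ x, f x = inner ℝ g x + c₀)
    (hnd : AffineIndependent ℝ ![a, b, c])
    (hfab : f a < f b) (hfbc : f b < f c)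
    (hin : HasInFlow (convexHull ℝ {a, b, c}) g (openSegment ℝ b c)) :
    π / 2 < ∠ a b c := by
  let B : AffineBasis (Fin 3) ℝ (EuclideanSpace ℝ (Fin 2)) :=
    ⟨![a, b, c], hnd, by rw [hnd.affineSpan_eq_top_iff_card_eq_finrank_add_one]; simp⟩
  have hB : range B = {a, b, c} := by
    change range ![a, b, c] = _
    rw [Matrix.range_cons, Matrix.range_cons, Matrix.range_cons, Matrix.range_empty]
    simp only [union_empty, singleton_union]
  have hp : 0 ≤ (B.coord 0).linear g := B.linear_coord_nonneg_of_hasInFlow (by rwa [hB])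
  have hg : g = (B.coord 0).linear g • (a - b) + (B.coord 2).linear g • (c - b) := by
    conv_lhs => rw [← B.sum_linear_coord_smul_sub g 1]
    simp only [Fin.sum_univ_three, sub_self, smul_zero, add_zero]
    rfl
  have hgab : inner ℝ g (a - b) < 0 := by rw [inner_sub_right]; linarith [hf a, hf b]
  have hgcb : 0 < inner ℝ g (c - b) := by rw [inner_sub_right]; linarith [hf b, hf c]
  exact InnerProductGeometry.pi_div_two_lt_angle_of_inner_neg
    (real_inner_neg_of_eq_smul_add_smul hg hp hgab hgcb)

/-- For a nondegenerate triangle `abc` in the Euclidean plane and an affine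
linear function `f` with gradient `g ≠ 0`, `f(a) < f(b) < f(c)`, gradient not parallel to
any edge: if the edge `bc` has an in-flow, then the interior angle at `b` exceeds `π/2`. -/
theorem stmt3 (a b c g : EuclideanSpace ℝ (Fin 2)) (c₀ : ℝ)
    (f : EuclideanSpace ℝ (Fin 2) → ℝ)
    (hf : ∀ x, f x = inner ℝ g x + c₀)
    (hg : g ≠ 0)
    (hnd : AffineIndependent ℝ ![a, b, c])
    (hfab : f a < f b) (hfbc : f b < f c)
    (hpar_ab : ∀ t : ℝ, g ≠ t • (b - a))
    (hpar_bc : ∀ t : ℝ, g ≠ t • (c - b))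
    (hpar_ac : ∀ t : ℝ, g ≠ t • (c - a))
    (hin : HasInFlow (convexHull ℝ {a, b, c}) g (openSegment ℝ b c)) :
    π / 2 < ∠ a b c :=
  stmt3_general a b c g c₀ f hf hnd hfab hfbc hin
end

section
/- Under the hypotheses of the previous statement (triangle abc with f(a) < f(b) < f(c), gradient not parallel to edges, and edge bc having an in-flow), the edge ab also has an in-flow: the negative gradient −∇f does not point into the interior of the triangle from the relative interior of edge ab. -/
/-!
Barycentric coordinates `λ_a, λ_b, λ_c` of the triangle turn the question into one about signs:
the edge opposite a vertex `p` has an in-flow iff `λ_p` does not increase along `-∇f`, i.e.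
`λ_p'(∇f) ≥ 0`. Expanding `∇f = λ_a'(∇f) (a - b) + λ_c'(∇f) (c - b)` gives
`‖∇f‖² = λ_a'(∇f) (f a - f b) + λ_c'(∇f) (f c - f b)`. The in-flow at `bc` says
`λ_a'(∇f) ≥ 0`, and `f a < f b < f c` then forces `λ_c'(∇f) > 0`, which is the in-flow at `ab`.
-/

open EuclideanGeometry Real Set

open Filter Topology

namespace AffineBasis

section Module

variable {ι k V : Type*} [Ring k] [AddCommGroup V] [Module k V] (B : AffineBasis ι k V)

theorem coord_add_smul_s4 (i : ι) (x w : V) (t : k) :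
    B.coord i (x + t • w) = B.coord i x + t * (B.coord i).linear w := by
  rw [add_comm, ← vadd_eq_add, AffineMap.map_vadd, map_smul, smul_eq_mul, vadd_eq_add, add_comm]

theorem sum_coord_linear_smul_sub [Fintype ι] (w : V) (j : ι) :
    ∑ i, (B.coord i).linear w • (B i - B j) = w := by
  have hcoord (i : ι) : B.coord i w = B.coord i 0 + (B.coord i).linear w := by
    simpa using B.coord_add_smul_s4 i 0 w 1
  have hsum : ∑ i, (B.coord i).linear w = 0 := by
    have h := congrArg₂ (· - ·) (B.sum_coord_apply_eq_one w) (B.sum_coord_apply_eq_one 0)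
    simpa [hcoord, Finset.sum_add_distrib] using h
  have hcomb := congrArg₂ (· - ·) (B.linear_combination_coord_eq_self w)
    (B.linear_combination_coord_eq_self 0)
  simp only [hcoord, add_smul, Finset.sum_add_distrib, add_sub_cancel_left, sub_zero] at hcomb
  simp only [smul_sub, Finset.sum_sub_distrib, ← Finset.sum_smul, hsum, zero_smul, sub_zero, hcomb]

theorem coord_lineMap_of_ne {i j l : ι} (hij : i ≠ j) (hil : i ≠ l) (s : k) :
    B.coord i (AffineMap.lineMap (B j) (B l) s) = 0 := by
  rw [AffineMap.apply_lineMap, B.coord_apply_ne hij, B.coord_apply_ne hil,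
    AffineMap.lineMap_same_apply]

end Module

section InnerProduct

variable {ι V : Type*} [Fintype ι] [NormedAddCommGroup V] [InnerProductSpace ℝ V]
  (B : AffineBasis ι ℝ V)

theorem inner_self_eq_sum_coord_linear_mul (g : V) (j : ι) :
    inner ℝ g g = ∑ i, (B.coord i).linear g * inner ℝ g (B i - B j) := by
  have h := congrArg (inner ℝ g) (B.sum_coord_linear_smul_sub g j)
  simpa only [inner_sum, real_inner_smul_right] using h.symm

end InnerProduct

section Normed

variable {ι E : Type*} [Finite ι] [NormedAddCommGroup E] [NormedSpace ℝ E]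
  (B : AffineBasis ι ℝ E)

theorem add_smul_notMem_interior_convexHull {i : ι} {x w : E} (hx : B.coord i x ≤ 0)
    (hw : (B.coord i).linear w ≤ 0) {t : ℝ} (ht : 0 ≤ t) :
    x + t • w ∉ interior (convexHull ℝ (range B)) := by
  rw [B.interior_convexHull]
  intro h
  have := h i
  rw [B.coord_add_smul_s4] at this
  nlinarith

theorem eventually_add_smul_mem_interior_convexHull {i : ι} {x w : E} (hx : B.coord i x = 0)
    (hpos : ∀ j ≠ i, 0 < B.coord j x) (hw : 0 < (B.coord i).linear w) :
    ∀ᶠ t in 𝓝[>] (0 : ℝ), x + t • w ∈ interior (convexHull ℝ (range B)) := by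
  simp only [B.interior_convexHull, mem_ofPred_eq]
  refine eventually_all.2 fun j => ?_
  simp only [B.coord_add_smul_s4]
  rcases eq_or_ne j i with rfl | hj
  · filter_upwards [self_mem_nhdsWithin] with t ht
    rw [hx, zero_add]
    exact mul_pos ht hw
  · refine nhdsWithin_le_nhds (Continuous.tendsto ?_ 0 |>.eventually (lt_mem_nhds ?_))
    · fun_prop
    · simpa using hpos j hj

end Normed

section Segment

variable {ι V : Type*} [AddCommGroup V] [Module ℝ V] (B : AffineBasis ι ℝ V)

theorem coord_lineMap_left_pos {j l : ι} (hjl : j ≠ l) {s : ℝ} (hs : s < 1) :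
    0 < B.coord j (AffineMap.lineMap (B j) (B l) s) := by
  rw [AffineMap.apply_lineMap, B.coord_apply_eq, B.coord_apply_ne hjl,
    AffineMap.lineMap_apply_ring]
  linarith

theorem coord_lineMap_right_pos {j l : ι} (hjl : j ≠ l) {s : ℝ} (hs : 0 < s) :
    0 < B.coord l (AffineMap.lineMap (B j) (B l) s) := by
  rw [AffineMap.apply_lineMap, B.coord_apply_eq, B.coord_apply_ne hjl.symm,
    AffineMap.lineMap_apply_ring]
  linarith

end Segment

theorem linear_coord_two_pos_of_linear_coord_zero_nonneg {V : Type*} [NormedAddCommGroup V]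
    [InnerProductSpace ℝ V]
    (B : AffineBasis (Fin 3) ℝ V) {g : V} (h0 : 0 ≤ (B.coord 0).linear g)
    (h01 : inner ℝ g (B 0 - B 1) < 0) (h21 : 0 < inner ℝ g (B 2 - B 1)) :
    0 < (B.coord 2).linear g := by
  have hnorm := B.inner_self_eq_sum_coord_linear_mul g 1
  rw [Fin.sum_univ_three, sub_self, inner_zero_right, mul_zero, add_zero] at hnorm
  by_contra! h2
  have hg : g = 0 := by
    rw [← real_inner_self_nonpos, hnorm]
    nlinarith
  rw [hg, inner_zero_left] at h01
  exact h01.false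

end AffineBasis

theorem hasInFlow_openSegment_iff (B : AffineBasis (Fin 3) ℝ (EuclideanSpace ℝ (Fin 2)))
    (g : EuclideanSpace ℝ (Fin 2)) {i j k : Fin 3} (hij : i ≠ j) (hik : i ≠ k) (hjk : j ≠ k) :
    HasInFlow (convexHull ℝ (range B)) g (openSegment ℝ (B j) (B k)) ↔
      0 ≤ (B.coord i).linear g := by
  have hface (s : ℝ) := B.coord_lineMap_of_ne hij hik s
  rw [HasInFlow, openSegment_eq_image_lineMap, forall_mem_image]
  constructor
  · intro hin
    by_contra! hneg
    have hpos : ∀ l ≠ i, 0 < B.coord l (AffineMap.lineMap (B j) (B k) (1 / 2 : ℝ)) := by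
      intro l hl
      obtain rfl | rfl : l = j ∨ l = k := by omega
      · exact B.coord_lineMap_left_pos hjk (by norm_num)
      · exact B.coord_lineMap_right_pos hjk (by norm_num)
    have henter := B.eventually_add_smul_mem_interior_convexHull (w := -g)
      (hface _) hpos (by rw [map_neg]; linarith)
    obtain ⟨t, hout, hin⟩ := ((hin (x := 1 / 2) ⟨by norm_num, by norm_num⟩).and henter).exists
    exact hout hin
  · intro hg s _
    filter_upwards [self_mem_nhdsWithin] with t ht
    exact B.add_smul_notMem_interior_convexHull (hface s).le (by rw [map_neg]; linarith) ht.le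

noncomputable def AffineIndependent.planeTriangleBasis {a b c : EuclideanSpace ℝ (Fin 2)}
    (h : AffineIndependent ℝ ![a, b, c]) : AffineBasis (Fin 3) ℝ (EuclideanSpace ℝ (Fin 2)) :=
  ⟨![a, b, c], h, by rw [h.affineSpan_eq_top_iff_card_eq_finrank_add_one]; simp⟩

theorem AffineIndependent.range_planeTriangleBasis {a b c : EuclideanSpace ℝ (Fin 2)}
    (h : AffineIndependent ℝ ![a, b, c]) : range h.planeTriangleBasis = {a, b, c} := by
  change range ![a, b, c] = _
  rw [Matrix.range_cons, Matrix.range_cons, Matrix.range_cons, Matrix.range_empty,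
    union_empty, singleton_union, singleton_union]

theorem stmt4_general (a b c g : EuclideanSpace ℝ (Fin 2)) (c₀ : ℝ)
    (f : EuclideanSpace ℝ (Fin 2) → ℝ)
    (hf : ∀ x, f x = inner ℝ g x + c₀)
    (hnd : AffineIndependent ℝ ![a, b, c])
    (hfab : f a < f b) (hfbc : f b < f c)
    (hin : HasInFlow (convexHull ℝ {a, b, c}) g (openSegment ℝ b c)) :
    HasInFlow (convexHull ℝ {a, b, c}) g (openSegment ℝ a b) := by
  set B := hnd.planeTriangleBasis
  have hinner (y z : EuclideanSpace ℝ (Fin 2)) : inner ℝ g (y - z) = f y - f z := by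
    rw [hf, hf, inner_sub_right]
    ring
  rw [← hnd.range_planeTriangleBasis] at hin ⊢
  have h0 : 0 ≤ (B.coord 0).linear g :=
    (hasInFlow_openSegment_iff B g (i := 0) (j := 1) (k := 2) (by decide) (by decide)
      (by decide)).1 hin
  have h2 : 0 < (B.coord 2).linear g :=
    B.linear_coord_two_pos_of_linear_coord_zero_nonneg h0 (by rw [hinner]; simpa)
      (by rw [hinner]; simpa)
  exact (hasInFlow_openSegment_iff B g (i := 2) (j := 0) (k := 1) (by decide) (by decide)
    (by decide)).2 h2.le

/-- Under the hypotheses of Statement 3 (nondegenerate triangle `abc`,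
affine linear `f` with gradient `g`, `f(a) < f(b) < f(c)`, gradient not parallel to any
edge, and the edge `bc` has an in-flow), the edge `ab` also has an in-flow. -/
theorem stmt4 (a b c g : EuclideanSpace ℝ (Fin 2)) (c₀ : ℝ)
    (f : EuclideanSpace ℝ (Fin 2) → ℝ)
    (hf : ∀ x, f x = inner ℝ g x + c₀)
    (hg : g ≠ 0)
    (hnd : AffineIndependent ℝ ![a, b, c])
    (hfab : f a < f b) (hfbc : f b < f c)
    (hpar_ab : ∀ t : ℝ, g ≠ t • (b - a))
    (hpar_bc : ∀ t : ℝ, g ≠ t • (c - b))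
    (hpar_ac : ∀ t : ℝ, g ≠ t • (c - a))
    (hin : HasInFlow (convexHull ℝ {a, b, c}) g (openSegment ℝ b c)) :
    HasInFlow (convexHull ℝ {a, b, c}) g (openSegment ℝ a b) :=
  stmt4_general a b c g c₀ f hf hnd hfab hfbc hin
end

section
/- Let F be a discrete Morse function on a finite CW complex X and let α be an i-cell of X. Then at most one of the following holds: (a) there exists an (i+1)-cell β > α with F(β) ≤ F(α); (b) there exists an (i−1)-cell γ < α with F(γ) ≥ F(α). In other words, the two exceptional sets in the definition of a discrete Morse function cannot both be nonempty for the same cell. -/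
/-- A finite regular cell complex, modeled combinatorially as a finite graded poset of
cells: `face α β` means `α` is a (proper, iterated) face of `β`.  Regularity provides the
diamond property (between a cell and a codimension-two face there are at least two
intermediate cells) and existence of intermediate cells in any interval. -/
structure RegularCellComplex where
  Cell : Type
  [fintypeCell : Fintype Cell]
  [decEqCell : DecidableEq Cell]
  face : Cell → Cell → Prop
  dim : Cell → ℕ
  face_trans : ∀ {α β γ}, face α β → face β γ → face α γ
  face_dim : ∀ {α β}, face α β → dim α < dim β
  diamond : ∀ {α β}, face α β → dim β = dim α + 2 →
    ∃ δ₁ δ₂, δ₁ ≠ δ₂ ∧ dim δ₁ = dim α + 1 ∧ dim δ₂ = dim α + 1 ∧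
      face α δ₁ ∧ face δ₁ β ∧ face α δ₂ ∧ face δ₂ β
  interval : ∀ {α β}, face α β → dim α + 2 ≤ dim β →
    ∃ δ, dim δ = dim α + 1 ∧ face α δ ∧ face δ β

attribute [instance] RegularCellComplex.fintypeCell RegularCellComplex.decEqCell

/-- `F` is a discrete Morse function (Forman): for each cell there is at most one
coface of dimension one higher with value `≤`, and at most one face of dimension one
lower with value `≥`. -/
def IsDiscreteMorse (X : RegularCellComplex) (F : X.Cell → ℝ) : Prop :=
  ∀ α : X.Cell,
    {β | X.face α β ∧ X.dim β = X.dim α + 1 ∧ F β ≤ F α}.Subsingleton ∧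
    {γ | X.face γ α ∧ X.dim γ + 1 = X.dim α ∧ F α ≤ F γ}.Subsingleton

/-- `F` is generic: distinct values on incident cells. -/
def IsGeneric (X : RegularCellComplex) (F : X.Cell → ℝ) : Prop :=
  ∀ {α β : X.Cell}, X.face α β → F α ≠ F β

/-- `F` is tame: faces of codimension at least two have strictly smaller value. -/
def IsTame (X : RegularCellComplex) (F : X.Cell → ℝ) : Prop :=
  ∀ {α β : X.Cell}, X.face α β → X.dim α + 2 ≤ X.dim β → F α < F β

/-- A cell `α` is critical for `F`: no exceptional coface and no exceptional face. -/
def IsCritical (X : RegularCellComplex) (F : X.Cell → ℝ) (α : X.Cell) : Prop :=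
  (¬ ∃ β, X.face α β ∧ X.dim β = X.dim α + 1 ∧ F β ≤ F α) ∧
  (¬ ∃ γ, X.face γ α ∧ X.dim γ + 1 = X.dim α ∧ F α ≤ F γ)

/-!
Suppose `γ < α < β` with `F β ≤ F α ≤ F γ`. By the diamond property there is a second cell
`δ ≠ α` strictly between `γ` and `β`. Either `F β ≤ F δ`, and then `δ` and `α` are two
exceptional faces of `β`, or `F δ < F β ≤ F γ`, and then `δ` and `α` are two exceptional
cofaces of `γ`; both contradict the Morse condition.
-/

namespace RegularCellComplex

variable (X : RegularCellComplex)

theorem exists_ne_between {γ β : X.Cell} (hγβ : X.face γ β) (hdim : X.dim β = X.dim γ + 2)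
    (α : X.Cell) : ∃ δ, δ ≠ α ∧ X.face γ δ ∧ X.face δ β ∧ X.dim δ = X.dim γ + 1 := by
  obtain ⟨δ₁, δ₂, hne, hd₁, hd₂, hγδ₁, hδ₁β, hγδ₂, hδ₂β⟩ := X.diamond hγβ hdim
  by_cases h : δ₁ = α
  · exact ⟨δ₂, fun h₂ => hne (h.trans h₂.symm), hγδ₂, hδ₂β, hd₂⟩
  · exact ⟨δ₁, h, hγδ₁, hδ₁β, hd₁⟩

end RegularCellComplex

theorem IsDiscreteMorse.eq_of_between {X : RegularCellComplex} {F : X.Cell → ℝ}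
    (hF : IsDiscreteMorse X F) {γ α δ β : X.Cell}
    (hγα : X.face γ α) (hαβ : X.face α β) (hdα : X.dim α = X.dim γ + 1)
    (hdβ : X.dim β = X.dim α + 1) (hFβ : F β ≤ F α) (hFγ : F α ≤ F γ)
    (hγδ : X.face γ δ) (hδβ : X.face δ β) (hdδ : X.dim δ = X.dim γ + 1) : δ = α := by
  rcases le_or_gt (F β) (F δ) with hβδ | hδβ'
  · exact (hF β).2 ⟨hδβ, by omega, hβδ⟩ ⟨hαβ, by omega, hFβ⟩
  · exact (hF γ).1 ⟨hγδ, hdδ, by linarith⟩ ⟨hγα, hdα, hFγ⟩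

/-- For a discrete Morse function `F` on a finite regular cell complex and a
cell `α`, the two exceptional conditions cannot both hold: there cannot simultaneously be
a coface `β` of dimension `dim α + 1` with `F β ≤ F α` and a face `γ` of dimension
`dim α − 1` with `F γ ≥ F α`. -/
theorem stmt7 (X : RegularCellComplex) (F : X.Cell → ℝ)
    (hF : IsDiscreteMorse X F) (α : X.Cell) :
    ¬ ((∃ β, X.face α β ∧ X.dim β = X.dim α + 1 ∧ F β ≤ F α) ∧
       (∃ γ, X.face γ α ∧ X.dim γ + 1 = X.dim α ∧ F α ≤ F γ)) := by
  rintro ⟨⟨β, hαβ, hdβ, hFβ⟩, ⟨γ, hγα, hdγ, hFγ⟩⟩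
  obtain ⟨δ, hδα, hγδ, hδβ, hdδ⟩ :=
    X.exists_ne_between (X.face_trans hγα hαβ) (by omega) α
  exact hδα (hF.eq_of_between hγα hαβ (by omega) hdβ hFβ hFγ hγδ hδβ hdδ)
end

section
/- Let F be a discrete Morse function on a finite regular cell complex X. If α^{(i)} < β^{(j)} with j ≥ i + 2 and F(α) > F(β), then there exists a chain of cells α = σ_i < σ_{i+1} < ⋯ < σ_{j−1} < σ_j = β with dim σ_k = k and F(σ_{j−1}) > F(α) > F(β). -/
/-! Among the two cells strictly between `α` and a codimension-two coface, the Morse condition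
allows at most one with value `≤ F α`, so the other one lies above `F α`. Climbing this way one
dimension at a time, with values increasing at each step, reaches a facet of `β` whose value
exceeds `F α`. -/

namespace RegularCellComplex

variable (X : RegularCellComplex)

structure IsSaturatedChain (σ : ℕ → X.Cell) (α β : X.Cell) : Prop where
  apply_dim_left : σ (X.dim α) = α
  apply_dim_right : σ (X.dim β) = β
  face_succ : ∀ l, X.dim α ≤ l → l < X.dim β → X.face (σ l) (σ (l + 1))
  dim_apply : ∀ l, X.dim α ≤ l → l ≤ X.dim β → X.dim (σ l) = l

variable {X}

theorem isSaturatedChain_const (β : X.Cell) : X.IsSaturatedChain (fun _ => β) β β where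
  apply_dim_left := rfl
  apply_dim_right := rfl
  face_succ _ h₁ h₂ := absurd h₂ (not_lt.2 h₁)
  dim_apply _ h₁ h₂ := (le_antisymm h₂ h₁).symm

theorem IsSaturatedChain.cons {σ : ℕ → X.Cell} {α δ β : X.Cell}
    (hσ : X.IsSaturatedChain σ δ β) (hαδ : X.face α δ) (hdim : X.dim δ = X.dim α + 1)
    (hδβ : X.dim δ ≤ X.dim β) :
    X.IsSaturatedChain (Function.update σ (X.dim α) α) α β where
  apply_dim_left := Function.update_self ..
  apply_dim_right := by
    rw [Function.update_of_ne (by omega), hσ.apply_dim_right]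
  face_succ l h₁ h₂ := by
    rcases h₁.eq_or_lt with rfl | h₁
    · rw [Function.update_self, Function.update_of_ne (by omega), ← hdim, hσ.apply_dim_left]
      exact hαδ
    · rw [Function.update_of_ne (by omega), Function.update_of_ne (by omega)]
      exact hσ.face_succ l (by omega) h₂
  dim_apply l h₁ h₂ := by
    rcases h₁.eq_or_lt with rfl | h₁
    · rw [Function.update_self]
    · rw [Function.update_of_ne (by omega)]
      exact hσ.dim_apply l (by omega) h₂

theorem exists_face_dim_eq_add_two {α β : X.Cell} (h : X.face α β)
    (hdim : X.dim α + 3 ≤ X.dim β) :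
    ∃ γ, X.dim γ = X.dim α + 2 ∧ X.face α γ ∧ X.face γ β := by
  obtain ⟨δ, hδ, hαδ, hδβ⟩ := X.interval h (by omega)
  obtain ⟨γ, hγ, hδγ, hγβ⟩ := X.interval hδβ (by omega)
  exact ⟨γ, by omega, X.face_trans hαδ hδγ, hγβ⟩

end RegularCellComplex

open RegularCellComplex

namespace IsDiscreteMorse

variable {X : RegularCellComplex} {F : X.Cell → ℝ}

theorem exists_cover_lt_of_dim_eq_add_two (hF : IsDiscreteMorse X F) {α β : X.Cell}
    (h : X.face α β) (hdim : X.dim β = X.dim α + 2) :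
    ∃ δ, X.dim δ = X.dim α + 1 ∧ X.face α δ ∧ X.face δ β ∧ F α < F δ := by
  obtain ⟨δ₁, δ₂, hne, hd₁, hd₂, hαδ₁, hδ₁β, hαδ₂, hδ₂β⟩ := X.diamond h hdim
  by_cases h₁ : F α < F δ₁
  · exact ⟨δ₁, hd₁, hαδ₁, hδ₁β, h₁⟩
  refine ⟨δ₂, hd₂, hαδ₂, hδ₂β, lt_of_not_ge fun h₂ => hne ?_⟩
  exact (hF α).1 ⟨hαδ₁, hd₁, not_lt.1 h₁⟩ ⟨hαδ₂, hd₂, h₂⟩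

theorem exists_cover_lt (hF : IsDiscreteMorse X F) {α β : X.Cell}
    (h : X.face α β) (hdim : X.dim α + 2 ≤ X.dim β) :
    ∃ δ, X.dim δ = X.dim α + 1 ∧ X.face α δ ∧ X.face δ β ∧ F α < F δ := by
  rcases hdim.eq_or_lt with hdim | hdim
  · exact hF.exists_cover_lt_of_dim_eq_add_two h hdim.symm
  obtain ⟨γ, hγ, hαγ, hγβ⟩ := exists_face_dim_eq_add_two h hdim
  obtain ⟨δ, hδ, hαδ, hδγ, hlt⟩ := hF.exists_cover_lt_of_dim_eq_add_two hαγ hγ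
  exact ⟨δ, hδ, hαδ, X.face_trans hδγ hγβ, hlt⟩

theorem exists_isSaturatedChain_lt (hF : IsDiscreteMorse X F) {α β : X.Cell}
    (h : X.face α β) (hdim : X.dim α + 2 ≤ X.dim β) :
    ∃ σ, X.IsSaturatedChain σ α β ∧ F α < F (σ (X.dim β - 1)) := by
  obtain ⟨n, hn⟩ := Nat.exists_eq_add_of_le hdim
  induction n generalizing α with
  | zero =>
    obtain ⟨δ, hδ, hαδ, hδβ, hlt⟩ := hF.exists_cover_lt h hdim
    have hσ := ((isSaturatedChain_const β).cons hδβ (by omega) le_rfl).cons hαδ hδ (by omega)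
    refine ⟨_, hσ, ?_⟩
    rwa [show X.dim β - 1 = X.dim α + 1 by omega, Function.update_of_ne (by omega),
      ← hδ, Function.update_self]
  | succ n ih =>
    obtain ⟨δ, hδ, hαδ, hδβ, hlt⟩ := hF.exists_cover_lt h hdim
    obtain ⟨σ, hσ, hσlt⟩ := ih hδβ (by omega) (by omega)
    refine ⟨_, hσ.cons hαδ hδ (by omega), ?_⟩
    rw [Function.update_of_ne (by omega)]
    exact hlt.trans hσlt

end IsDiscreteMorse

theorem stmt8_general (X : RegularCellComplex) (F : X.Cell → ℝ)
    (hF : IsDiscreteMorse X F) (α β : X.Cell)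
    (hface : X.face α β) (hdim : X.dim α + 2 ≤ X.dim β) :
    ∃ σ : ℕ → X.Cell,
      σ (X.dim α) = α ∧ σ (X.dim β) = β ∧
      (∀ l, X.dim α ≤ l → l < X.dim β → X.face (σ l) (σ (l + 1))) ∧
      (∀ l, X.dim α ≤ l → l ≤ X.dim β → X.dim (σ l) = l) ∧
      F α < F (σ (X.dim β - 1)) := by
  obtain ⟨σ, hσ, hlt⟩ := hF.exists_isSaturatedChain_lt hface hdim
  exact ⟨σ, hσ.apply_dim_left, hσ.apply_dim_right, hσ.face_succ, hσ.dim_apply, hlt⟩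

/-- If `F` is a discrete Morse function, `α < β`, `dim β ≥ dim α + 2` and
`F α > F β`, then there is a saturated chain `α = σ_{dim α} < σ_{dim α + 1} < ⋯ < σ_{dim β} = β`
with `dim σ_k = k` whose penultimate cell satisfies `F (σ_{dim β − 1}) > F α > F β`. -/
theorem stmt8 (X : RegularCellComplex) (F : X.Cell → ℝ)
    (hF : IsDiscreteMorse X F) (α β : X.Cell)
    (hface : X.face α β) (hdim : X.dim α + 2 ≤ X.dim β) (hval : F β < F α) :
    ∃ σ : ℕ → X.Cell,
      σ (X.dim α) = α ∧ σ (X.dim β) = β ∧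
      (∀ l, X.dim α ≤ l → l < X.dim β → X.face (σ l) (σ (l + 1))) ∧
      (∀ l, X.dim α ≤ l → l ≤ X.dim β → X.dim (σ l) = l) ∧
      F α < F (σ (X.dim β - 1)) :=
  stmt8_general X F hF α β hface hdim
end

section
/- Let F be a generic discrete Morse function on a finite regular cell complex, let (α^{(i)}, β^{(j)}) with j ≥ i+2, α < β, F(α) > F(β) be a pair violating tameness that is maximal with respect to the order comparing j. Let ε^{(j−1)} be a facet of β with α < ε and F(ε) > F(α). Then replacing F(β) by any value in the open interval (F(α), F(ε)) (chosen so that the new function is still generic) yields a discrete Morse function with the same critical cells as F, and the new function has strictly fewer tameness-violating pairs. -/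
/-- The set of tameness-violating pairs of `F`: pairs `(α, β)` with `α < β`,
`dim β ≥ dim α + 2` and `F α > F β`. -/
def ViolatingPairs (X : RegularCellComplex) (F : X.Cell → ℝ) : Set (X.Cell × X.Cell) :=
  {p | X.face p.1 p.2 ∧ X.dim p.1 + 2 ≤ X.dim p.2 ∧ F p.2 < F p.1}

open Function

theorem RegularCellComplex.ne_of_face (X : RegularCellComplex) {a b : X.Cell}
    (h : X.face a b) : a ≠ b :=
  fun hab => (X.face_dim h).ne (congrArg X.dim hab)

def SameFacetOrder (X : RegularCellComplex) (F G : X.Cell → ℝ) : Prop :=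
  ∀ ⦃a b : X.Cell⦄, X.face a b → X.dim b = X.dim a + 1 → (G b ≤ G a ↔ F b ≤ F a)

section SameFacetOrder

variable {X : RegularCellComplex} {F G : X.Cell → ℝ}

theorem isDiscreteMorse_iff_of_sameFacetOrder (h : SameFacetOrder X F G) :
    IsDiscreteMorse X G ↔ IsDiscreteMorse X F := by
  refine forall_congr' fun a => ?_
  have hup : {b | X.face a b ∧ X.dim b = X.dim a + 1 ∧ G b ≤ G a} =
      {b | X.face a b ∧ X.dim b = X.dim a + 1 ∧ F b ≤ F a} :=
    Set.ext fun _ => and_congr_right fun hf => and_congr_right fun hd => h hf hd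
  have hdown : {c | X.face c a ∧ X.dim c + 1 = X.dim a ∧ G a ≤ G c} =
      {c | X.face c a ∧ X.dim c + 1 = X.dim a ∧ F a ≤ F c} :=
    Set.ext fun _ => and_congr_right fun hf => and_congr_right fun hd => h hf hd.symm
  rw [hup, hdown]

theorem isCritical_iff_of_sameFacetOrder (h : SameFacetOrder X F G) (γ : X.Cell) :
    IsCritical X G γ ↔ IsCritical X F γ :=
  and_congr
    (not_congr <| exists_congr fun _ =>
      and_congr_right fun hf => and_congr_right fun hd => h hf hd)
    (not_congr <| exists_congr fun _ =>
      and_congr_right fun hf => and_congr_right fun hd => h hf hd.symm)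

end SameFacetOrder

section RaiseValue

variable {X : RegularCellComplex} {F : X.Cell → ℝ} {β : X.Cell} {v : ℝ}

theorem sameFacetOrder_update_of_lt (hβv : F β < v) (hcof : ∀ η, X.face β η → v < F η)
    (hfacet : ∀ γ, X.face γ β → X.dim β = X.dim γ + 1 → F β ≤ F γ → v ≤ F γ) :
    SameFacetOrder X F (update F β v) := by
  intro a b hab hd
  by_cases hb : b = β
  · subst hb
    rw [update_self, update_of_ne (X.ne_of_face hab)]
    exact ⟨fun hle => hβv.le.trans hle, hfacet a hab hd⟩
  · by_cases ha : a = β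
    · subst ha
      rw [update_self, update_of_ne hb]
      have := hcof b hab
      constructor <;> intro <;> linarith
    · rw [update_of_ne hb, update_of_ne ha]

theorem violatingPairs_update_subset (hβv : F β < v) (hcof : ∀ η, X.face β η → v < F η) :
    ViolatingPairs X (update F β v) ⊆ ViolatingPairs X F := by
  rintro ⟨a, b⟩ ⟨hab, hd, hlt⟩
  refine ⟨hab, hd, ?_⟩
  dsimp only at hab hlt ⊢
  by_cases hb : b = β
  · subst hb
    rw [update_self, update_of_ne (X.ne_of_face hab)] at hlt
    exact hβv.trans hlt
  · by_cases ha : a = β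
    · subst ha
      rw [update_self, update_of_ne hb] at hlt
      exact absurd hlt (hcof b hab).not_gt
    · rwa [update_of_ne hb, update_of_ne ha] at hlt

theorem violatingPairs_update_ssubset {α : X.Cell} (hviol : (α, β) ∈ ViolatingPairs X F)
    (hαv : F α < v) (hcof : ∀ η, X.face β η → v < F η) :
    ViolatingPairs X (update F β v) ⊂ ViolatingPairs X F := by
  refine (violatingPairs_update_subset (hviol.2.2.trans hαv) hcof).ssubset_of_mem_notMem
    hviol fun ⟨hαβ, _, hlt⟩ => ?_
  dsimp only at hαβ hlt
  rw [update_self, update_of_ne (X.ne_of_face hαβ)] at hlt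
  exact hlt.not_gt hαv

end RaiseValue

theorem stmt11_general (X : RegularCellComplex) (F : X.Cell → ℝ)
    (hF : IsDiscreteMorse X F)
    (α β ε : X.Cell)
    (hviol : (α, β) ∈ ViolatingPairs X F)
    (hεβ : X.face ε β) (hεdim : X.dim ε + 1 = X.dim β)
    (hεval : F α < F ε)
    (hη : ∀ η, X.face β η → F ε < F η)
    (v : ℝ) (hv : v ∈ Set.Ioo (F α) (F ε))
    (F' : X.Cell → ℝ) (hF' : F' = Function.update F β v) :
    IsDiscreteMorse X F' ∧
    (∀ γ, IsCritical X F' γ ↔ IsCritical X F γ) ∧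
    (ViolatingPairs X F').ncard < (ViolatingPairs X F).ncard := by
  subst hF'
  obtain ⟨hαv, hvε⟩ := hv
  have hβα : F β < F α := hviol.2.2
  have hcof : ∀ η, X.face β η → v < F η := fun η h => hvε.trans (hη η h)
  have hfacet : ∀ γ, X.face γ β → X.dim β = X.dim γ + 1 → F β ≤ F γ → v ≤ F γ := by
    intro γ hγ hd hle
    obtain rfl : γ = ε := (hF β).2 ⟨hγ, hd.symm, hle⟩ ⟨hεβ, hεdim, (hβα.trans hεval).le⟩
    exact hvε.le
  have hsame := sameFacetOrder_update_of_lt (hβα.trans hαv) hcof hfacet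
  exact ⟨(isDiscreteMorse_iff_of_sameFacetOrder hsame).2 hF,
    isCritical_iff_of_sameFacetOrder hsame,
    Set.ncard_lt_ncard (violatingPairs_update_ssubset hviol hαv hcof) (Set.toFinite _)⟩

/-- induction step of Lemma 3.2: Let `F` be a generic discrete Morse
function, `(α, β)` a tameness-violating pair maximal with respect to `dim β`, and `ε` a
facet of `β` with `α < ε` and `F ε > F α` (so that every `η > β` has `F η > F ε`).
Then replacing `F β` by any value `v ∈ (F α, F ε)` keeping genericity yields a discrete
Morse function with the same critical cells and strictly fewer tameness-violating pairs. -/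
theorem stmt11 (X : RegularCellComplex) (F : X.Cell → ℝ)
    (hF : IsDiscreteMorse X F) (hgen : IsGeneric X F)
    (α β ε : X.Cell)
    (hviol : (α, β) ∈ ViolatingPairs X F)
    (hmax : ∀ p ∈ ViolatingPairs X F, X.dim p.2 ≤ X.dim β)
    (hαε : X.face α ε) (hεβ : X.face ε β) (hεdim : X.dim ε + 1 = X.dim β)
    (hεval : F α < F ε)
    (hη : ∀ η, X.face β η → F ε < F η)
    (v : ℝ) (hv : v ∈ Set.Ioo (F α) (F ε))
    (F' : X.Cell → ℝ) (hF' : F' = Function.update F β v)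
    (hgen' : IsGeneric X F') :
    IsDiscreteMorse X F' ∧
    (∀ γ, IsCritical X F' γ ↔ IsCritical X F γ) ∧
    (ViolatingPairs X F').ncard < (ViolatingPairs X F).ncard :=
  stmt11_general X F hF α β ε hviol hεβ hεdim hεval hη v hv F' hF'
end

section
/- Dually, under the same hypotheses (σ a simplex with sharp affine metric, f affine and generic on σ), if a facet τ of σ has an out-flow (the negative gradient −∇f points into the interior of σ from interior points of τ), then τ contains the vertex of σ at which f attains its maximum. -/
/-!
Suppose the maximum of `f` on the vertices were attained at the vertex `a` opposite `τ`, and let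
`p` be the foot of the altitude from `a` onto the hyperplane of `τ`. The out-flow condition says
that `-g` has a positive component along `a - p`, i.e. `⟪g, a - p⟫ < 0`, so `f p > f a ≥ f (v j)`
for every vertex and hence `p ∉ σ`. Sharpness forces `p ∈ σ`: the line through `p` and the
centroid of `τ` meets `σ` in a chord `[P₁, P₂]`, the plane through `a` and this chord cuts `σ` in
the triangle `a P₁ P₂`, and since `a - p` is orthogonal to the chord, the acute angles at `P₁`
and `P₂` put `p` between them.
-/

open EuclideanGeometry Real

/-- The metric on `σ` is *sharp* (Definition 5.2): for every vertex `a` of `σ` (taken from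
the vertex set `vert`) and every 2-dimensional affine plane `L` through `a` whose
intersection with `σ` is a (nondegenerate) triangle `abc`, the triangle is acute-angled. -/
def SharpSet (m : ℕ) (σ : Set (EuclideanSpace ℝ (Fin m)))
    (vert : Set (EuclideanSpace ℝ (Fin m))) : Prop :=
  ∀ a ∈ vert, ∀ b c : EuclideanSpace ℝ (Fin m),
    AffineIndependent ℝ ![a, b, c] →
    (∃ L : AffineSubspace ℝ (EuclideanSpace ℝ (Fin m)), a ∈ L ∧
      Module.finrank ℝ L.direction = 2 ∧
      (L : Set (EuclideanSpace ℝ (Fin m))) ∩ σ = convexHull ℝ {a, b, c}) →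
    ∠ b a c < π / 2 ∧ ∠ a b c < π / 2 ∧ ∠ a c b < π / 2

open Set Filter Topology AffineMap
open scoped RealInnerProductSpace

section Line

variable {E : Type*} [NormedAddCommGroup E] [NormedSpace ℝ E]

theorem isCompact_preimage_lineMap {K : Set E} (hK : IsCompact K) {p q : E} (hpq : p ≠ q) :
    IsCompact (lineMap p q ⁻¹' K : Set ℝ) := by
  have h : Topology.IsClosedEmbedding (lineMap p q : ℝ → E) := by
    convert (Homeomorph.addRight p).isClosedEmbedding.comp
      (isClosedEmbedding_smul_left (𝕜 := ℝ) (sub_ne_zero.2 hpq.symm)) using 1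
    ext r
    simp [lineMap_apply_module']
  exact h.isCompact_preimage hK

theorem affineSpan_pair_lineMap_inter_subset_segment {K : Set E} {p q : E} {r₁ r₂ : ℝ}
    (hr : r₁ ≤ r₂) (hK : ∀ r, lineMap p q r ∈ K → r ∈ Icc r₁ r₂) :
    (line[ℝ, lineMap p q r₁, lineMap p q r₂] : Set E) ∩ K ⊆
      segment ℝ (lineMap p q r₁) (lineMap p q r₂) := by
  rintro y ⟨hy, hyK⟩
  obtain ⟨r, rfl⟩ := mem_affineSpan_pair_iff_exists_lineMap_eq.1
    (affineSpan_pair_le_of_mem_of_mem (lineMap_mem_affineSpan_pair _ _ _)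
      (lineMap_mem_affineSpan_pair _ _ _) hy)
  rw [← image_segment, segment_eq_Icc hr]
  exact mem_image_of_mem _ (hK r hyK)

end Line

section Euclidean

variable {V : Type*} [NormedAddCommGroup V] [InnerProductSpace ℝ V]

theorem InnerProductGeometry.inner_pos_of_angle_lt_pi_div_two {x y : V}
    (h : InnerProductGeometry.angle x y < π / 2) : 0 < ⟪x, y⟫ := by
  rw [InnerProductGeometry.angle, arccos_lt_pi_div_two] at h
  exact (div_pos_iff.1 h).elim And.left fun h' =>
    absurd h'.2 (mul_nonneg (norm_nonneg x) (norm_nonneg y)).not_gt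

theorem mul_neg_of_angle_lineMap_lt_pi_div_two {a p q : V} (horth : ⟪a - p, q - p⟫ = 0)
    {r s : ℝ} (h : ∠ a (lineMap p q r) (lineMap p q s) < π / 2) : (s - r) * r < 0 := by
  rw [EuclideanGeometry.angle] at h
  have hpos := InnerProductGeometry.inner_pos_of_angle_lt_pi_div_two h
  have hcalc : ⟪a -ᵥ lineMap p q r, lineMap p q s -ᵥ lineMap p q r⟫ =
      -((s - r) * r * ‖q - p‖ ^ 2) := by
    rw [vsub_eq_sub, vsub_eq_sub, lineMap_apply_module', lineMap_apply_module',
      show a - (r • (q - p) + p) = (a - p) - r • (q - p) by abel,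
      show s • (q - p) + p - (r • (q - p) + p) = (s - r) • (q - p) by module,
      real_inner_smul_right, inner_sub_left, real_inner_smul_left, horth,
      real_inner_self_eq_norm_sq]
    ring
  exact neg_of_mul_neg_left (by linarith) (sq_nonneg _)

end Euclidean

namespace AffineBasis

section Affine

variable {ι E : Type*} [AddCommGroup E] [Module ℝ E] (b : AffineBasis ι ℝ E) (i : ι)

noncomputable def oppositeHyperplane : AffineSubspace ℝ E :=
  (AffineSubspace.mk' (0 : ℝ) ⊥).comap (b.coord i)

variable {b i}

@[simp]
theorem mem_oppositeHyperplane {x : E} : x ∈ b.oppositeHyperplane i ↔ b.coord i x = 0 := by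
  simp [oppositeHyperplane]

theorem self_notMem_oppositeHyperplane : b i ∉ b.oppositeHyperplane i := by
  simp

theorem convexHull_image_compl_subset_oppositeHyperplane :
    convexHull ℝ (b '' {i}ᶜ) ⊆ b.oppositeHyperplane i :=
  convexHull_min
    (by rintro _ ⟨j, hj, rfl⟩; exact mem_oppositeHyperplane.2 (b.coord_apply_ne (Ne.symm hj)))
    (AffineSubspace.convex _)

theorem mem_of_mem_affineSpan_insert_of_mem_oppositeHyperplane {s : AffineSubspace ℝ E}
    {p₀ y : E} (hp₀ : p₀ ∈ s) (hs : s ≤ b.oppositeHyperplane i)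
    (hy : y ∈ affineSpan ℝ (insert (b i) (s : Set E))) (hyH : y ∈ b.oppositeHyperplane i) :
    y ∈ s := by
  obtain ⟨r, y₀, hy₀, rfl⟩ := (AffineSubspace.mem_affineSpan_insert_iff hp₀ _ _).1 hy
  have hr : r = 0 := by
    have h := mem_oppositeHyperplane.1 hyH
    rw [AffineMap.map_vadd, map_smul, linearMap_vsub, mem_oppositeHyperplane.1 (hs hp₀),
      mem_oppositeHyperplane.1 (hs hy₀), coord_apply_eq] at h
    simpa using h
  simpa [hr] using hy₀

theorem affineSpan_inter_convexHull_eq_convexHull_triangle [Nontrivial ι] {P₁ P₂ : E}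
    (h₁ : P₁ ∈ b.oppositeHyperplane i) (h₂ : P₂ ∈ b.oppositeHyperplane i)
    (h₁σ : P₁ ∈ convexHull ℝ (range b)) (h₂σ : P₂ ∈ convexHull ℝ (range b))
    (hseg : (line[ℝ, P₁, P₂] : Set E) ∩ convexHull ℝ (range b) ⊆ segment ℝ P₁ P₂) :
    (affineSpan ℝ {b i, P₁, P₂} : Set E) ∩ convexHull ℝ (range b) =
      convexHull ℝ {b i, P₁, P₂} := by
  refine Subset.antisymm ?_ (subset_inter
    (convexHull_min (subset_affineSpan ℝ _) (AffineSubspace.convex _))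
    (convexHull_min (insert_subset (subset_convexHull ℝ _ (mem_range_self i))
      (pair_subset h₁σ h₂σ)) (convex_convexHull ℝ _)))
  rintro z ⟨hzL, hzσ⟩
  obtain ⟨j, hj⟩ := exists_ne i
  -- `σ` is the cone from `b i` over the opposite facet
  rw [← insert_image_compl_eq_range b i,
    convexHull_insert ⟨b j, mem_image_of_mem b hj⟩] at hzσ
  obtain ⟨_, rfl, y, hyτ, hzy⟩ := mem_convexJoin.1 hzσ
  obtain ⟨c, -, rfl⟩ := (segment_eq_image_lineMap ℝ (b i) y).subset hzy
  rcases eq_or_ne c 0 with rfl | hc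
  · exact subset_convexHull ℝ _ (by simp)
  have hyL : y ∈ affineSpan ℝ {b i, P₁, P₂} := by
    simpa [hc] using lineMap_mem c⁻¹ (mem_affineSpan ℝ (mem_insert _ _)) hzL
  have hy : y ∈ segment ℝ P₁ P₂ := by
    refine hseg ⟨mem_of_mem_affineSpan_insert_of_mem_oppositeHyperplane
      (left_mem_affineSpan_pair ℝ P₁ P₂) (affineSpan_pair_le_of_mem_of_mem h₁ h₂) ?_
      (convexHull_image_compl_subset_oppositeHyperplane hyτ), ?_⟩
    · rwa [affineSpan_insert_affineSpan]
    · exact convexHull_mono (image_subset_range _ _) hyτ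
  exact (convex_convexHull ℝ _).segment_subset (subset_convexHull ℝ _ (mem_insert _ _))
    (convexHull_mono (subset_insert _ _) (convexHull_pair (𝕜 := ℝ) P₁ P₂ ▸ hy)) hzy

theorem eventually_lineMap_mem_convexHull [Finite ι] {p q : E}
    (hp : p ∈ b.oppositeHyperplane i) (hq : q ∈ b.oppositeHyperplane i)
    (hq_pos : ∀ j ≠ i, 0 < b.coord j q) :
    ∀ᶠ r in 𝓝 (1 : ℝ), lineMap p q r ∈ convexHull ℝ (range b) := by
  simp_rw [b.convexHull_eq_nonneg_coord, mem_ofPred_eq, AffineMap.apply_lineMap]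
  refine eventually_all.2 fun j => ?_
  rcases eq_or_ne j i with rfl | hj
  · simp [mem_oppositeHyperplane.1 hp, mem_oppositeHyperplane.1 hq]
  · have hcont : Continuous fun r : ℝ => lineMap (b.coord j p) (b.coord j q) r :=
      lineMap_continuous
    exact ((hcont.tendsto 1).eventually (lt_mem_nhds (by simpa using hq_pos j hj))).mono
      fun _ => le_of_lt

theorem exists_mem_oppositeHyperplane_forall_coord_pos [Fintype ι] [Nontrivial ι] :
    ∃ q ∈ b.oppositeHyperplane i, ∀ j ≠ i, 0 < b.coord j q := by
  classical
  obtain ⟨j₀, hj₀⟩ := exists_ne i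
  refine ⟨Finset.centroid ℝ {i}ᶜ b, mem_oppositeHyperplane.2 ?_, fun j hj => ?_⟩
  · exact b.coord_apply_combination_of_notMem (by simp)
      (Finset.sum_centroidWeights_eq_one_of_nonempty ℝ _ ⟨j₀, by simpa using hj₀⟩)
  · rw [b.coord_apply_centroid (by simpa using hj)]
    exact inv_pos.2 (Nat.cast_pos.2 (Finset.card_pos.2 ⟨j, by simpa using hj⟩))

end Affine

/-- The foot `p` of the altitude from `b i`. -/
theorem exists_mem_oppositeHyperplane_inner_sub_eq {ι E : Type*} [Nontrivial ι]
    [NormedAddCommGroup E] [InnerProductSpace ℝ E] [FiniteDimensional ℝ E]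
    (b : AffineBasis ι ℝ E) (i : ι) : ∃ p ∈ b.oppositeHyperplane i, ∃ c > 0,
      ∀ z, ⟪b i - p, z⟫ = c * (b.coord i).linear z := by
  set u := (InnerProductSpace.toDual ℝ E).symm (b.coord i).linear.toContinuousLinearMap
  have hu : ∀ z, ⟪u, z⟫ = (b.coord i).linear z := fun z => InnerProductSpace.toDual_symm_apply
  obtain ⟨j, hj⟩ := exists_ne i
  have hu0 : u ≠ 0 := by
    intro h
    have h' := hu (b i -ᵥ b j)
    rw [h, inner_zero_left, linearMap_vsub, coord_apply_eq, coord_apply_ne b hj.symm] at h'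
    norm_num at h'
  have hnorm : 0 < ‖u‖ ^ 2 := by positivity
  refine ⟨(-(‖u‖ ^ 2)⁻¹ • u) +ᵥ b i, mem_oppositeHyperplane.2 ?_, (‖u‖ ^ 2)⁻¹,
    inv_pos.2 hnorm, fun z => ?_⟩
  · rw [AffineMap.map_vadd, map_smul, ← hu, real_inner_self_eq_norm_sq, coord_apply_eq,
      smul_eq_mul, vadd_eq_add]
    field_simp
    ring
  · rw [vadd_eq_add, sub_add_cancel_right, inner_neg_left, real_inner_smul_left, hu]
    ring

theorem coord_linear_pos_of_add_smul_mem_interior {ι E : Type*} [Finite ι]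
    [NormedAddCommGroup E] [NormedSpace ℝ E] (b : AffineBasis ι ℝ E) {i : ι} {x w : E} {t : ℝ}
    (hx : x ∈ b.oppositeHyperplane i) (ht : 0 < t)
    (h : x + t • w ∈ interior (convexHull ℝ (range b))) : 0 < (b.coord i).linear w := by
  rw [b.interior_convexHull] at h
  have h' := h i
  rw [add_comm, ← vadd_eq_add, AffineMap.map_vadd, mem_oppositeHyperplane.1 hx, map_smul,
    smul_eq_mul, vadd_eq_add, add_zero] at h'
  exact pos_of_mul_pos_right h' ht.le

section Sharp

variable {m : ℕ} {ι : Type*} [Nontrivial ι]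
  {b : AffineBasis ι ℝ (EuclideanSpace ℝ (Fin m))} {i : ι}

theorem neg_and_pos_of_sharpSet (hsharp : SharpSet m (convexHull ℝ (range b)) (range b))
    {p q : EuclideanSpace ℝ (Fin m)} (hp : p ∈ b.oppositeHyperplane i)
    (hq : q ∈ b.oppositeHyperplane i) (horth : ⟪b i - p, q - p⟫ = 0) (hpq : p ≠ q)
    {r₁ r₂ : ℝ} (hr : r₁ < r₂) (h₁ : lineMap p q r₁ ∈ convexHull ℝ (range b))
    (h₂ : lineMap p q r₂ ∈ convexHull ℝ (range b))
    (hchord : ∀ r, lineMap p q r ∈ convexHull ℝ (range b) → r ∈ Icc r₁ r₂) :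
    r₁ < 0 ∧ 0 < r₂ := by
  set P₁ := lineMap p q r₁
  set P₂ := lineMap p q r₂
  have hline := affineSpan_pair_le_of_mem_of_mem hp hq
  have hP₁ : P₁ ∈ b.oppositeHyperplane i := hline (lineMap_mem_affineSpan_pair _ _ _)
  have hP₂ : P₂ ∈ b.oppositeHyperplane i := hline (lineMap_mem_affineSpan_pair _ _ _)
  have hindep : AffineIndependent ℝ ![b i, P₁, P₂] :=
    affineIndependent_of_ne_of_notMem_of_mem_of_mem ((lineMap_injective ℝ hpq).ne hr.ne)
      self_notMem_oppositeHyperplane hP₁ hP₂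
  have hplane : Module.finrank ℝ (affineSpan ℝ {b i, P₁, P₂}).direction = 2 := by
    rw [direction_affineSpan, ← Matrix.range_cons_cons_empty P₁ P₂ ![], ← Set.singleton_union,
      ← Matrix.range_cons]
    exact hindep.finrank_vectorSpan (by simp)
  obtain ⟨-, hangle₁, hangle₂⟩ := hsharp (b i) (mem_range_self i) P₁ P₂ hindep
    ⟨_, mem_affineSpan ℝ (mem_insert _ _), hplane,
      affineSpan_inter_convexHull_eq_convexHull_triangle hP₁ hP₂ h₁ h₂
        (affineSpan_pair_lineMap_inter_subset_segment hr.le hchord)⟩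
  have hneg₁ := mul_neg_of_angle_lineMap_lt_pi_div_two horth hangle₁
  have hneg₂ := mul_neg_of_angle_lineMap_lt_pi_div_two horth hangle₂
  constructor <;> nlinarith

theorem mem_convexHull_of_sharpSet [Fintype ι]
    (hsharp : SharpSet m (convexHull ℝ (range b)) (range b))
    {p : EuclideanSpace ℝ (Fin m)} (hp : p ∈ b.oppositeHyperplane i)
    (hperp : ∀ z, (b.coord i).linear z = 0 → ⟪b i - p, z⟫ = 0) :
    p ∈ convexHull ℝ (range b) := by
  obtain ⟨q, hq, hq_pos⟩ := b.exists_mem_oppositeHyperplane_forall_coord_pos (i := i)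
  rcases eq_or_ne p q with rfl | hpq
  · rw [b.convexHull_eq_nonneg_coord]
    intro j
    rcases eq_or_ne j i with rfl | hj
    · exact (mem_oppositeHyperplane.1 hp).ge
    · exact (hq_pos j hj).le
  set S : Set ℝ := lineMap p q ⁻¹' convexHull ℝ (range b)
  have hS : IsCompact S :=
    isCompact_preimage_lineMap ((finite_range b).isCompact_convexHull (𝕜 := ℝ)) hpq
  have h1 : S ∈ 𝓝 1 := b.eventually_lineMap_mem_convexHull hp hq hq_pos
  have hleft : ∀ᶠ r in 𝓝[<] 1, r ∈ S := nhdsWithin_le_nhds h1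
  have hright : ∀ᶠ r in 𝓝[>] 1, r ∈ S := nhdsWithin_le_nhds h1
  obtain ⟨r₁, hr₁S, hr₁⟩ := (hleft.and self_mem_nhdsWithin).exists
  obtain ⟨r₂, hr₂S, hr₂⟩ := (hright.and self_mem_nhdsWithin).exists
  have hchord : ∀ r ∈ S, r ∈ Icc (sInf S) (sSup S) :=
    fun r hr => ⟨csInf_le hS.bddBelow hr, le_csSup hS.bddAbove hr⟩
  have hSne : S.Nonempty := ⟨r₁, hr₁S⟩
  obtain ⟨hinf, hsup⟩ := neg_and_pos_of_sharpSet hsharp hp hq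
    (hperp _ (by rw [← vsub_eq_sub, linearMap_vsub, mem_oppositeHyperplane.1 hp,
      mem_oppositeHyperplane.1 hq, vsub_self])) hpq
    (((hchord r₁ hr₁S).1.trans_lt hr₁).trans (hr₂.trans_le (hchord r₂ hr₂S).2))
    (hS.sInf_mem hSne) (hS.sSup_mem hSne) hchord
  simpa using ((convex_convexHull ℝ _).affine_preimage (lineMap p q)).ordConnected.out
    (hS.sInf_mem hSne) (hS.sSup_mem hSne) ⟨hinf.le, hsup.le⟩

end Sharp

end AffineBasis

theorem stmt13_general (m : ℕ) (v : Fin (m + 1) → EuclideanSpace ℝ (Fin m))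
    (hv : AffineIndependent ℝ v)
    (hsharp : SharpSet m (convexHull ℝ (Set.range v)) (Set.range v))
    (g : EuclideanSpace ℝ (Fin m)) (c₀ : ℝ) (f : EuclideanSpace ℝ (Fin m) → ℝ)
    (hf : ∀ x, f x = inner ℝ g x + c₀)
    (hpar : ∀ i : Fin (m + 1), g ∉ vectorSpan ℝ (v '' {i}ᶜ))
    (i₁ : Fin (m + 1))
    (hout : ∀ x ∈ intrinsicInterior ℝ (convexHull ℝ (v '' {i₁}ᶜ)),
      ∀ᶠ t in nhdsWithin (0 : ℝ) (Set.Ioi 0),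
        x + t • (-g) ∈ interior (convexHull ℝ (Set.range v))) :
    ∃ i₀, i₀ ≠ i₁ ∧ ∀ j, f (v j) ≤ f (v i₀) := by
  obtain ⟨i₀, hmax⟩ := Finite.exists_max fun i => f (v i)
  refine ⟨i₀, fun h => ?_, hmax⟩
  subst h
  obtain rfl | hm := Nat.eq_zero_or_pos m
  · exact hpar i₀ (Subsingleton.elim g 0 ▸ zero_mem _)
  have : Nontrivial (Fin (m + 1)) := Fin.nontrivial_iff_two_le.2 (by omega)
  let b : AffineBasis (Fin (m + 1)) ℝ (EuclideanSpace ℝ (Fin m)) :=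
    ⟨v, hv, hv.affineSpan_eq_top_iff_card_eq_finrank_add_one.2 (by simp)⟩
  obtain ⟨j, hj⟩ := exists_ne i₀
  obtain ⟨x, hx⟩ := Set.Nonempty.intrinsicInterior (convex_convexHull ℝ (v '' {i₀}ᶜ))
    ⟨v j, subset_convexHull ℝ _ (mem_image_of_mem v hj)⟩
  obtain ⟨t, hxt, ht⟩ := ((hout x hx).and self_mem_nhdsWithin).exists
  have hg : 0 < (b.coord i₀).linear (-g) := b.coord_linear_pos_of_add_smul_mem_interior
    (b.convexHull_image_compl_subset_oppositeHyperplane (intrinsicInterior_subset hx)) ht hxt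
  obtain ⟨p, hp, c, hc, hpc⟩ := b.exists_mem_oppositeHyperplane_inner_sub_eq i₀
  have hpσ : p ∈ convexHull ℝ (range v) :=
    AffineBasis.mem_convexHull_of_sharpSet hsharp hp fun z hz => by rw [hpc, hz, mul_zero]
  obtain ⟨_, ⟨k, rfl⟩, hk⟩ :=
    ((innerₛₗ ℝ g).convexOn convex_univ).exists_ge_of_mem_convexHull (subset_univ _) hpσ
  have hvp : ⟪g, v i₀⟫ < ⟪g, p⟫ := by
    have h : ⟪v i₀ - p, g⟫ = c * (b.coord i₀).linear g := hpc g
    rw [inner_sub_left, real_inner_comm g, real_inner_comm g] at h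
    rw [map_neg] at hg
    nlinarith
  have := hmax k
  simp only [hf, innerₛₗ_apply_apply] at this hk
  linarith

/-- Corollary 6.3: Dually to Proposition 6.2, if the facet `τ` opposite to
the vertex `v i₁` of the simplex `σ` (with sharp metric, generic affine `f`) has an
out-flow (the flow along `-g` from relative interior points of `τ` enters the interior of
`σ` for small positive times), then `τ` contains the vertex at which `f` is maximal. -/
theorem stmt13 (m : ℕ) (v : Fin (m + 1) → EuclideanSpace ℝ (Fin m))
    (hv : AffineIndependent ℝ v)
    (hsharp : SharpSet m (convexHull ℝ (Set.range v)) (Set.range v))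
    (g : EuclideanSpace ℝ (Fin m)) (c₀ : ℝ) (f : EuclideanSpace ℝ (Fin m) → ℝ)
    (hf : ∀ x, f x = inner ℝ g x + c₀)
    (hdistinct : Function.Injective fun i => f (v i))
    (hpar : ∀ i : Fin (m + 1), g ∉ vectorSpan ℝ (v '' {i}ᶜ))
    (i₁ : Fin (m + 1))
    (hout : ∀ x ∈ intrinsicInterior ℝ (convexHull ℝ (v '' {i₁}ᶜ)),
      ∀ᶠ t in nhdsWithin (0 : ℝ) (Set.Ioi 0),
        x + t • (-g) ∈ interior (convexHull ℝ (Set.range v))) :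
    ∃ i₀, i₀ ≠ i₁ ∧ ∀ j, f (v j) ≤ f (v i₀) :=
  stmt13_general m v hv hsharp g c₀ f hf hpar i₁ hout
end

section
/- Let σ be a geometric simplex with an affine metric and f an affine function on σ with distinct values at the vertices and gradient not parallel to any face. Let p be the vertex of σ at which f attains its maximum. Then every point of σ lies on some gradient trajectory (piecewise linear integral curve of the multivalued negative-gradient field of f restricted to faces of σ) starting at p; i.e., σ is swept by the gradient trajectories from p. -/
/-!
Each point `x` of a face `τ` with at least two vertices is the endpoint of a gradient segment in
`τ` starting on a proper face: since `f` takes distinct values at the vertices, the negative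
gradient `u` of `f|τ` is nonzero, and moving from `x` in the direction `-u` one leaves `τ` through
a facet at some point `y`; the segment from `y` to `x` is then a gradient segment. By induction on
faces `y` is reached from `p`. A vertex `q ≠ p` is reached from `p` along the edge `pq`, on which
`f` decreases because `p` is the maximum.
-/

open EuclideanGeometry Real

/-- `u` is the negative gradient of the affine function `f` restricted to the face of the
simplex spanned by `{v i : i ∈ s}` (with respect to the Euclidean metric of the face):
`u` lies in the direction space of the face and `⟪u, v i − v j⟫ = f (v j) − f (v i)`. -/
def IsNegGradOnFace (m : ℕ) (v : Fin (m + 1) → EuclideanSpace ℝ (Fin m))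
    (f : EuclideanSpace ℝ (Fin m) → ℝ) (s : Finset (Fin (m + 1)))
    (u : EuclideanSpace ℝ (Fin m)) : Prop :=
  u ∈ vectorSpan ℝ (v '' ↑s) ∧
  ∀ i ∈ s, ∀ j ∈ s, (inner ℝ u (v i - v j) : ℝ) = f (v j) - f (v i)

/-- A gradient trajectory of the multivalued negative gradient field of `f` on the faces
of the simplex spanned by `v`: a concatenation of `k` affine segments, the `l`-th defined
on `[t l, t (l+1)]`, each contained in some face and with constant derivative equal to the
negative gradient of `f` on that face. -/
def IsGradTraj (m : ℕ) (v : Fin (m + 1) → EuclideanSpace ℝ (Fin m))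
    (f : EuclideanSpace ℝ (Fin m) → ℝ) (k : ℕ) (t : ℕ → ℝ)
    (γ : ℝ → EuclideanSpace ℝ (Fin m)) : Prop :=
  (∀ l < k, t l ≤ t (l + 1)) ∧
  ∀ l < k, ∃ s : Finset (Fin (m + 1)), s.Nonempty ∧
    ∃ u, IsNegGradOnFace m v f s u ∧
      ∀ r ∈ Set.Icc (t l) (t (l + 1)),
        γ r ∈ convexHull ℝ (v '' ↑s) ∧ γ r = γ (t l) + (r - t l) • u

section Barycentric

variable {𝕜 ι E : Type*} [AddCommGroup E] {v : ι → E} {s : Finset ι}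

theorem exists_sum_eq_zero_of_mem_vectorSpan_image [Ring 𝕜] [Module 𝕜 E] {u : E}
    (hu : u ∈ vectorSpan 𝕜 (v '' s)) :
    ∃ c : ι → 𝕜, ∑ i ∈ s, c i = 0 ∧ ∑ i ∈ s, c i • v i = u := by
  classical
  rcases s.eq_empty_or_nonempty with rfl | ⟨j, hj⟩
  · simp_all
  rw [vectorSpan_eq_span_vsub_set_right 𝕜 (Set.mem_image_of_mem v hj), Set.image_image,
    Submodule.mem_span_image_finset_iff_exists_fun'] at hu
  obtain ⟨c, rfl⟩ := hu
  refine ⟨fun i => c i - if i = j then ∑ i ∈ s, c i else 0, ?_, ?_⟩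
  · simp [Finset.sum_sub_distrib, Finset.sum_ite_eq', hj]
  · simp [sub_smul, ite_smul, Finset.sum_sub_distrib, Finset.sum_ite_eq', hj, smul_sub,
      Finset.sum_smul]

variable [Field 𝕜] [LinearOrder 𝕜] [IsStrictOrderedRing 𝕜] [Module 𝕜 E]

theorem mem_convexHull_image_iff {x : E} :
    x ∈ convexHull 𝕜 (v '' s) ↔
      ∃ w : ι → 𝕜, (∀ i ∈ s, 0 ≤ w i) ∧ ∑ i ∈ s, w i = 1 ∧ ∑ i ∈ s, w i • v i = x := by
  classical
  constructor
  · refine fun hx => convexHull_min (t := {y | ∃ w : ι → 𝕜, (∀ i ∈ s, 0 ≤ w i) ∧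
      ∑ i ∈ s, w i = 1 ∧ ∑ i ∈ s, w i • v i = y}) ?_ ?_ hx
    · rintro _ ⟨i, hi, rfl⟩
      refine ⟨fun j => if j = i then 1 else 0, fun j _ => by positivity, ?_, ?_⟩
      · simp [Finset.sum_ite_eq', Finset.mem_coe.mp hi]
      · simp [ite_smul, Finset.sum_ite_eq', Finset.mem_coe.mp hi]
    · rintro _ ⟨w, hw0, hw1, rfl⟩ _ ⟨w', hw0', hw1', rfl⟩ a b ha hb hab
      refine ⟨a • w + b • w', fun i hi => ?_, ?_, ?_⟩
      · simp only [Pi.add_apply, Pi.smul_apply, smul_eq_mul]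
        exact add_nonneg (mul_nonneg ha (hw0 i hi)) (mul_nonneg hb (hw0' i hi))
      · simp [Finset.sum_add_distrib, ← Finset.mul_sum, hw1, hw1', hab]
      · simp [add_smul, mul_smul, Finset.sum_add_distrib, ← Finset.smul_sum]
  · rintro ⟨w, hw0, hw1, rfl⟩
    rw [← Finset.centerMass_eq_of_sum_1 _ _ hw1]
    exact s.centerMass_mem_convexHull hw0 (hw1 ▸ one_pos) fun i hi => ⟨i, hi, rfl⟩

theorem exists_weight_eq_zero {w c : ι → 𝕜} (hw : ∀ i ∈ s, 0 ≤ w i) (hc : ∃ i ∈ s, 0 < c i) :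
    ∃ i₀ ∈ s, ∃ Δ : 𝕜, 0 ≤ Δ ∧ (∀ i ∈ s, 0 ≤ w i - Δ * c i) ∧ w i₀ = Δ * c i₀ := by
  classical
  -- ratio test: `Δ` is the least `w i / c i` with `0 < c i`
  obtain ⟨i₀, hi₀, hmin⟩ := Finset.exists_min_image (s.filter fun i => 0 < c i)
    (fun i => w i / c i) (by simpa [Finset.filter_nonempty_iff] using hc)
  rw [Finset.mem_filter] at hi₀
  refine ⟨i₀, hi₀.1, w i₀ / c i₀, div_nonneg (hw _ hi₀.1) hi₀.2.le, fun i hi => ?_,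
    (div_mul_cancel₀ _ hi₀.2.ne').symm⟩
  rcases le_or_gt (c i) 0 with hci | hci
  · nlinarith [hw i hi, div_nonneg (hw _ hi₀.1) hi₀.2.le]
  · have := hmin i (Finset.mem_filter.mpr ⟨hi, hci⟩)
    rw [le_div_iff₀ hci] at this
    linarith

theorem exists_sub_smul_mem_convexHull_erase [DecidableEq ι] {x u : E}
    (hx : x ∈ convexHull 𝕜 (v '' s)) (hu : u ∈ vectorSpan 𝕜 (v '' s)) (hu0 : u ≠ 0) :
    ∃ i₀ ∈ s, ∃ Δ : 𝕜, 0 ≤ Δ ∧ x - Δ • u ∈ convexHull 𝕜 (v '' ↑(s.erase i₀)) := by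
  obtain ⟨w, hw0, hw1, rfl⟩ := mem_convexHull_image_iff.mp hx
  obtain ⟨c, hc0, rfl⟩ := exists_sum_eq_zero_of_mem_vectorSpan_image hu
  have hc : ∃ i ∈ s, 0 < c i := by
    by_contra! hc
    have hc_zero := (Finset.sum_eq_zero_iff_of_nonpos hc).mp hc0
    exact hu0 (Finset.sum_eq_zero fun i hi => by rw [hc_zero i hi, zero_smul])
  obtain ⟨i₀, hi₀, Δ, hΔ, hnonneg, hzero⟩ := exists_weight_eq_zero hw0 hc
  refine ⟨i₀, hi₀, Δ, hΔ, mem_convexHull_image_iff.mpr ⟨fun i => w i - Δ * c i,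
    fun i hi => hnonneg i (Finset.mem_of_mem_erase hi), ?_, ?_⟩⟩
  · rw [Finset.sum_erase s (by rw [hzero, sub_self]), Finset.sum_sub_distrib,
      ← Finset.mul_sum, hw1, hc0, mul_zero, sub_zero]
  · rw [Finset.sum_erase s (by simp only [hzero, sub_self, zero_smul])]
    simp only [sub_smul, mul_smul, Finset.sum_sub_distrib, Finset.smul_sum]

end Barycentric

section GradientTrajectories

variable {m : ℕ} {v : Fin (m + 1) → EuclideanSpace ℝ (Fin m)} {f : EuclideanSpace ℝ (Fin m) → ℝ}

/-- The negative gradient on a face is the orthogonal projection of `-g` onto its direction. -/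
theorem exists_isNegGradOnFace {g : EuclideanSpace ℝ (Fin m)} {c₀ : ℝ}
    (hf : ∀ x, f x = inner ℝ g x + c₀) (s : Finset (Fin (m + 1))) :
    ∃ u, IsNegGradOnFace m v f s u := by
  set K := vectorSpan ℝ (v '' ↑s)
  refine ⟨K.starProjection (-g), K.starProjection_apply_mem _, fun i hi j hj => ?_⟩
  have hd : v i - v j ∈ K :=
    vsub_mem_vectorSpan ℝ (Set.mem_image_of_mem v hi) (Set.mem_image_of_mem v hj)
  have horth := K.sub_starProjection_mem_orthogonal (-g) _ hd
  rw [inner_sub_right, inner_neg_right, real_inner_comm g, real_inner_comm (K.starProjection _),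
    inner_sub_right] at horth
  rw [hf, hf]
  linarith

theorem IsNegGradOnFace.ne_zero {s : Finset (Fin (m + 1))} {u : EuclideanSpace ℝ (Fin m)}
    (hu : IsNegGradOnFace m v f s u) {i j : Fin (m + 1)} (hi : i ∈ s) (hj : j ∈ s)
    (hij : f (v i) ≠ f (v j)) : u ≠ 0 := by
  rintro rfl
  have h := hu.2 i hi j hj
  rw [inner_zero_left] at h
  exact hij (sub_eq_zero.mp h.symm).symm

variable (m v f) in
def GradReachable (p x : EuclideanSpace ℝ (Fin m)) : Prop :=
  ∃ (k : ℕ) (t : ℕ → ℝ) (γ : ℝ → EuclideanSpace ℝ (Fin m)),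
    IsGradTraj m v f k t γ ∧ γ (t 0) = p ∧ γ (t k) = x

theorem GradReachable.refl (p : EuclideanSpace ℝ (Fin m)) : GradReachable m v f p p :=
  ⟨0, fun _ => 0, fun _ => p, ⟨fun _ h => absurd h (Nat.not_lt_zero _),
    fun _ h => absurd h (Nat.not_lt_zero _)⟩, rfl, rfl⟩

theorem IsGradTraj.monotoneOn {k : ℕ} {t : ℕ → ℝ} {γ : ℝ → EuclideanSpace ℝ (Fin m)}
    (h : IsGradTraj m v f k t γ) : MonotoneOn t (Set.Iic k) :=
  monotoneOn_of_le_succ Set.ordConnected_Iic fun l _ _ hl => h.1 l hl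

theorem GradReachable.add_smul {p y u : EuclideanSpace ℝ (Fin m)} {s : Finset (Fin (m + 1))}
    {Δ : ℝ} (hy : GradReachable m v f p y) (hu : IsNegGradOnFace m v f s u) (hΔ : 0 ≤ Δ)
    (hys : y ∈ convexHull ℝ (v '' s)) (hyu : y + Δ • u ∈ convexHull ℝ (v '' s)) :
    GradReachable m v f p (y + Δ • u) := by
  obtain ⟨k, t, γ, htraj, rfl, rfl⟩ := hy
  have hs : s.Nonempty := by simpa using Set.nonempty_of_mem hys
  have hsegment : ∀ τ ∈ Set.Icc 0 Δ, γ (t k) + τ • u ∈ convexHull ℝ (v '' s) := by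
    rintro τ ⟨hτ0, hτΔ⟩
    rcases hΔ.eq_or_lt with rfl | hΔ
    · rwa [le_antisymm hτΔ hτ0, zero_smul, add_zero]
    have := (convex_convexHull ℝ _).add_smul_mem hys hyu
      ⟨div_nonneg hτ0 hΔ.le, (div_le_one hΔ).mpr hτΔ⟩
    rwa [smul_smul, div_mul_cancel₀ _ hΔ.ne'] at this
  have ht : ∀ l ≤ k, t l ≤ t k := fun l hl => htraj.monotoneOn hl (Set.mem_Iic.mpr le_rfl) hl
  refine ⟨k + 1, fun l => if l ≤ k then t l else t k + Δ,
    fun r => if r ≤ t k then γ r else γ (t k) + (r - t k) • u, ⟨fun l hl => ?_, fun l hl => ?_⟩,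
    by simp [ht 0 k.zero_le], ?_⟩
  · rcases Nat.lt_succ_iff_lt_or_eq.mp hl with hl | rfl
    · simpa [hl.le, Nat.succ_le_of_lt hl] using htraj.1 l hl
    · simpa using hΔ
  · rcases Nat.lt_succ_iff_lt_or_eq.mp hl with hl | rfl
    · obtain ⟨s', hs', u', hu', hseg⟩ := htraj.2 l hl
      refine ⟨s', hs', u', hu', fun r hr => ?_⟩
      simp only [if_pos hl.le, if_pos (Nat.succ_le_of_lt hl)] at hr ⊢
      rw [if_pos (hr.2.trans (ht _ hl)), if_pos (ht _ hl.le)]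
      exact hseg r hr
    · refine ⟨s, hs, u, hu, fun r hr => ?_⟩
      simp only [le_refl, if_true, Nat.not_succ_le_self, if_false] at hr ⊢
      by_cases hrk : r ≤ t l
      · obtain rfl := le_antisymm hrk hr.1
        simpa using hsegment 0 ⟨le_rfl, hΔ⟩
      · simp only [if_neg hrk]
        exact ⟨hsegment _ ⟨sub_nonneg.mpr hr.1, by linarith [hr.2]⟩, trivial⟩
  · simp only [Nat.not_succ_le_self, if_false]
    split_ifs with h
    · simp [le_antisymm (by linarith : Δ ≤ 0) hΔ]
    · rw [add_sub_cancel_left]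

theorem gradReachable_vertex_of_lt {g : EuclideanSpace ℝ (Fin m)} {c₀ : ℝ}
    (hf : ∀ x, f x = inner ℝ g x + c₀) {i j : Fin (m + 1)} (hlt : f (v j) < f (v i)) :
    GradReachable m v f (v i) (v j) := by
  obtain ⟨u, hu⟩ := exists_isNegGradOnFace (v := v) hf {i, j}
  have hu_span : u ∈ ℝ ∙ (v j -ᵥ v i) := by
    simpa [Set.image_insert_eq, vectorSpan_pair_rev] using hu.1
  obtain ⟨a, rfl⟩ := Submodule.mem_span_singleton.mp hu_span
  have h := hu.2 j (by simp) i (by simp)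
  rw [vsub_eq_sub, real_inner_smul_left, real_inner_self_eq_norm_sq] at h
  have ha : 0 < a := pos_of_mul_pos_left (h ▸ sub_pos.mpr hlt) (sq_nonneg _)
  have hmem : ∀ l ∈ ({i, j} : Finset _), v l ∈ convexHull ℝ (v '' ↑({i, j} : Finset _)) :=
    fun l hl => subset_convexHull ℝ _ (Set.mem_image_of_mem v hl)
  have hend : v i + a⁻¹ • a • (v j -ᵥ v i) = v j := by
    rw [smul_smul, inv_mul_cancel₀ ha.ne', one_smul, vsub_eq_sub, add_sub_cancel]
  rw [← hend]
  exact (GradReachable.refl (v i)).add_smul hu (inv_nonneg.mpr ha.le) (hmem i (by simp))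
    (by rw [hend]; exact hmem j (by simp))

theorem gradReachable_of_mem_convexHull {g : EuclideanSpace ℝ (Fin m)} {c₀ : ℝ}
    (hf : ∀ x, f x = inner ℝ g x + c₀) (hdistinct : Function.Injective fun i => f (v i))
    {i₁ : Fin (m + 1)} (hmax : ∀ j, f (v j) ≤ f (v i₁)) (s : Finset (Fin (m + 1))) :
    ∀ x ∈ convexHull ℝ (v '' s), GradReachable m v f (v i₁) x := by
  classical
  induction s using Finset.strongInduction with
  | H s ih =>
  intro x hx
  have hs : s.Nonempty := by simpa using Set.nonempty_of_mem hx
  obtain ⟨i, rfl⟩ | ⟨i, hi, j, hj, hij⟩ := hs.exists_eq_singleton_or_nontrivial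
  · rw [Finset.coe_singleton, Set.image_singleton, convexHull_singleton,
      Set.mem_singleton_iff] at hx
    subst hx
    rcases eq_or_ne i i₁ with rfl | hi
    · exact .refl _
    · exact gradReachable_vertex_of_lt hf ((hmax i).lt_of_ne (hdistinct.ne hi))
  · obtain ⟨u, hu⟩ := exists_isNegGradOnFace (v := v) hf s
    obtain ⟨i₀, hi₀, Δ, hΔ, hy⟩ := exists_sub_smul_mem_convexHull_erase hx hu.1
      (hu.ne_zero hi hj (hdistinct.ne hij))
    have hys := convexHull_mono (Set.image_mono (Finset.erase_subset i₀ s)) hy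
    simpa using (ih _ (Finset.erase_ssubset hi₀) _ hy).add_smul hu hΔ hys (by simpa using hx)

end GradientTrajectories

theorem stmt15_general (m : ℕ) (v : Fin (m + 1) → EuclideanSpace ℝ (Fin m))
    (g : EuclideanSpace ℝ (Fin m)) (c₀ : ℝ) (f : EuclideanSpace ℝ (Fin m) → ℝ)
    (hf : ∀ x, f x = inner ℝ g x + c₀)
    (hdistinct : Function.Injective fun i => f (v i))
    (i₁ : Fin (m + 1)) (hmax : ∀ j, f (v j) ≤ f (v i₁)) :
    ∀ x ∈ convexHull ℝ (Set.range v),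
      ∃ (k : ℕ) (t : ℕ → ℝ) (γ : ℝ → EuclideanSpace ℝ (Fin m)),
        IsGradTraj m v f k t γ ∧ γ (t 0) = v i₁ ∧ γ (t k) = x := by
  intro x hx
  rw [← Set.image_univ, ← Finset.coe_univ] at hx
  exact gradReachable_of_mem_convexHull hf hdistinct hmax Finset.univ x hx

/-- Lemma 10.2: Let `σ` be the simplex spanned by affinely independent
points `v 0, …, v m` with a sharp Euclidean metric, and `f` an affine function with
distinct values at the vertices and gradient not parallel to any facet. If `p = v i₁` is
the vertex at which `f` attains its maximum, then every point of `σ` lies on a gradient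
trajectory starting at `p`: `σ` is swept by the gradient trajectories from `p`. -/
theorem stmt15 (m : ℕ) (v : Fin (m + 1) → EuclideanSpace ℝ (Fin m))
    (hv : AffineIndependent ℝ v)
    (hsharp : SharpSet m (convexHull ℝ (Set.range v)) (Set.range v))
    (g : EuclideanSpace ℝ (Fin m)) (c₀ : ℝ) (f : EuclideanSpace ℝ (Fin m) → ℝ)
    (hf : ∀ x, f x = inner ℝ g x + c₀)
    (hdistinct : Function.Injective fun i => f (v i))
    (hpar : ∀ i : Fin (m + 1), g ∉ vectorSpan ℝ (v '' {i}ᶜ))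
    (i₁ : Fin (m + 1)) (hmax : ∀ j, f (v j) ≤ f (v i₁)) :
    ∀ x ∈ convexHull ℝ (Set.range v),
      ∃ (k : ℕ) (t : ℕ → ℝ) (γ : ℝ → EuclideanSpace ℝ (Fin m)),
        IsGradTraj m v f k t γ ∧ γ (t 0) = v i₁ ∧ γ (t k) = x :=
  stmt15_general m v g c₀ f hf hdistinct i₁ hmax
end
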